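/- arXiv:2602.20469 — 2 statements merged into one kernel-verified Lean document; each statement's English description precedes it below -/
import Mathlib

section
/- Let τ ∈ [0,1), α ≥ 0, θ ∈ ℝ, and c = cos θ. Then D_θ(τ c α) < 0, where D_θ is the quartic polynomial with coefficients a₄ = 16(1−τ²+c²τ²), a₃ = −32cτ(α+2)(1−τ²+c²τ²), a₂ = 16α²c⁴τ⁴ + 4(α²−8α−11)(1−τ²)² + 8c²τ²(2α²−5α−6)(1−τ²), a₁ = 4cτ(1−τ²)(2α²c²τ² − (1−τ²)(2α³+5α²+8α+3)), a₀ = (2α+1)²(1−τ²)²(α²c²τ² − (2α+1)(1−τ²)). -/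
open Real

theorem stmt1 (τ α θ : ℝ) (hτ0 : 0 ≤ τ) (hτ1 : τ < 1) (hα : 0 ≤ α) :
    let c := Real.cos θ
    let a4 := 16 * (1 - τ^2 + c^2 * τ^2)
    let a3 := -32 * c * τ * (α + 2) * (1 - τ^2 + c^2 * τ^2)
    let a2 := 16 * α^2 * c^4 * τ^4 + 4 * (α^2 - 8*α - 11) * (1 - τ^2)^2
      + 8 * c^2 * τ^2 * (2*α^2 - 5*α - 6) * (1 - τ^2)
    let a1 := 4 * c * τ * (1 - τ^2) * (2*α^2*c^2*τ^2 - (1 - τ^2)*(2*α^3 + 5*α^2 + 8*α + 3))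
    let a0 := (2*α + 1)^2 * (1 - τ^2)^2 * (α^2*c^2*τ^2 - (2*α + 1)*(1 - τ^2))
    let x := τ * c * α
    a4 * x^4 + a3 * x^3 + a2 * x^2 + a1 * x + a0 < 0 := by
  intro c a4 a3 a2 a1 a0 x
  set s : ℝ := c^2 * τ^2 with hs
  set u : ℝ := 1 - τ^2 with hu
  have hs0 : 0 ≤ s := by positivity
  have hu0 : 0 < u := by nlinarith
  have key : a4 * x^4 + a3 * x^3 + a2 * x^2 + a1 * x + a0 =
      -((4*α*s + (1 + 2*α)*u)^3 + 27*α^2*s*u^2) := by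
    simp only [a4, a3, a2, a1, a0, x, hs, hu]; ring
  rw [key]
  have h1 : 0 < 4*α*s + (1 + 2*α)*u := by nlinarith
  have : 0 < (4*α*s + (1 + 2*α)*u)^3 + 27*α^2*s*u^2 := by positivity
  linarith
end

section
/- For α > 0 and τ ∈ (0,1), the discriminant of the quadratic polynomial (in u) ∂F/∂u equals −5184 α³ τ⁸ (α+1)² (1−τ)² (1+τ)², which is strictly negative; hence ∂F/∂u has no real roots and F(α,τ,·) is strictly monotone in u. -/
open Real

theorem stmt4 (α τ : ℝ) (hα : 0 < α) (hτ : τ ∈ Set.Ioo (0:ℝ) 1) :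
    let a := -48*α^3*τ^6
    let b := 48*α^2*τ^4*(α*τ^2 + α + τ^2 - 1)
    let c := -3*τ^2*(4*α^3*(τ^2+1)^2 + α^2*(τ^2-1)*(17*τ^2-1) + (22*α+9)*(τ^2-1)^2)
    let F : ℝ → ℝ := fun u =>
      -16*α^3*τ^6*u^3 + 24*α^2*τ^4*(α*τ^2 + α + τ^2 - 1)*u^2 + c*u
      + 2*(α+1)^3*τ^6 + 3*(α+1)^2*(2*α+7)*τ^4 + 6*(α+1)*(α^2-11*α-8)*τ^2
      + (2*α+1)*(α+5)^2
    b^2 - 4*a*c = -5184*α^3*τ^8*(α+1)^2*(1-τ)^2*(1+τ)^2 ∧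
    b^2 - 4*a*c < 0 ∧
    (∀ u : ℝ, a*u^2 + b*u + c ≠ 0) ∧
    StrictAnti F := by
  intro a b c F
  obtain ⟨hτ0, hτ1⟩ := hτ
  have hdisc : b^2 - 4*a*c = -5184*α^3*τ^8*(α+1)^2*(1-τ)^2*(1+τ)^2 := by
    simp only [a, b, c]; ring
  have hneg : b^2 - 4*a*c < 0 := by
    rw [hdisc]
    have h1 : 0 < α^3 := by positivity
    have h2 : 0 < τ^8 := by positivity
    have h3 : 0 < (α+1)^2 := by positivity
    have h4 : 0 < (1-τ)^2 := pow_pos (by linarith) 2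
    have h5 : 0 < (1+τ)^2 := by positivity
    nlinarith [mul_pos (mul_pos (mul_pos (mul_pos h1 h2) h3) h4) h5]
  have ha : a < 0 := by
    have : 0 < α^3 * τ^6 := by positivity
    simp only [a]; nlinarith
  have hlt : ∀ u : ℝ, a*u^2 + b*u + c < 0 := by
    intro u
    have key : 4*a*(a*u^2 + b*u + c) = (2*a*u + b)^2 - (b^2 - 4*a*c) := by ring
    have hpos : 0 < 4*a*(a*u^2 + b*u + c) := by
      rw [key]; nlinarith [sq_nonneg (2*a*u + b)]
    nlinarith
  refine ⟨hdisc, hneg, fun u => (hlt u).ne, ?_⟩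
  have hderiv : ∀ u : ℝ, HasDerivAt F (a*u^2 + b*u + c) u := by
    intro u
    have : HasDerivAt F (-16*α^3*τ^6*(3*u^2) + 24*α^2*τ^4*(α*τ^2 + α + τ^2 - 1)*(2*u) + c*1 + 0) u := by
      apply HasDerivAt.add_const
      apply HasDerivAt.add_const
      apply HasDerivAt.add_const
      apply HasDerivAt.add_const
      exact (((hasDerivAt_pow 3 u).const_mul _).add
        ((hasDerivAt_pow 2 u).const_mul _)).add ((hasDerivAt_id u).const_mul c) |>.congr_deriv (by ring)
    convert this using 1
    simp only [a, b]; ring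
  apply strictAnti_of_deriv_neg
  intro u
  rw [(hderiv u).deriv]
  exact hlt u
end
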